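/- (Sensitivity part of Theorem 2, single-observation content.) For every α ≥ 0, parameter β, and covariate x ∈ ℝ^{k+1}, the cross moment of the RP score with the maximum likelihood score under the model satisfies Σ_{j=1}^{d+1} π_j(x,β)·Ψ_α(β,x,e_j)·Ψ_0(β,x,e_j)ᵀ = Γ(α)^{−α/(1+α)}·[ J(α) − Γ(α)^{−1}·ξ(α)ξ(α)ᵀ ], an identity of d(k+1)×d(k+1) matrices, where Ψ_0(β,x,e_j) = ((e_j)* − π*(x,β)) ⊗ x and e_j is the j-th standard basis vector of ℝ^{d+1}. -/
import Mathlib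


open Matrix Filter

noncomputable section

/-- PLRM probabilities. -/
def plrmPi {d k : ℕ} (x : Fin (k + 1) → ℝ) (β : Fin d → Fin (k + 1) → ℝ)
    (j : Fin (d + 1)) : ℝ :=
  (if h : (j : ℕ) < d then Real.exp (∑ t, x t * β ⟨j, h⟩ t) else 1) /
    (1 + ∑ s : Fin d, Real.exp (∑ t, x t * β s t))

/-- `Δ(p) = diag(p) − ppᵀ`. -/
def deltaMat {n : ℕ} (p : Fin n → ℝ) : Matrix (Fin n) (Fin n) ℝ :=
  Matrix.diagonal p - Matrix.vecMulVec p p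

/-- `Δ*(π)`: `Δ(π)` with its last row deleted. -/
def deltaStar {d : ℕ} (π : Fin (d + 1) → ℝ) : Matrix (Fin d) (Fin (d + 1)) ℝ :=
  Matrix.of fun m j => deltaMat π m.castSucc j

/-- `diag^γ(π)`. -/
def diagPow {d : ℕ} (π : Fin (d + 1) → ℝ) (γ : ℝ) : Matrix (Fin (d + 1)) (Fin (d + 1)) ℝ :=
  Matrix.diagonal fun j => π j ^ γ

/-- `Γ(α) = ∑_{j=1}^{d+1} π_j(x,β)^{α+1}`. -/
def Gam {d k : ℕ} (α : ℝ) (x : Fin (k + 1) → ℝ) (β : Fin d → Fin (k + 1) → ℝ) : ℝ :=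
  ∑ j, plrmPi x β j ^ (α + 1)

/-- `Υ(α,y) = ∑_{j=1}^{d+1} π_j(x,β)^α y_j`. -/
def Ups {d k : ℕ} (α : ℝ) (x : Fin (k + 1) → ℝ) (β : Fin d → Fin (k + 1) → ℝ)
    (y : Fin (d + 1) → ℝ) : ℝ :=
  ∑ j, plrmPi x β j ^ α * y j

/-- The RP score `Ψ_α(β,x,y) ∈ ℝ^{d(k+1)}`, indexed by block `m` and coordinate `t`. -/
def psiVec {d k : ℕ} (α : ℝ) (x : Fin (k + 1) → ℝ) (β : Fin d → Fin (k + 1) → ℝ)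
    (y : Fin (d + 1) → ℝ) : Fin d × Fin (k + 1) → ℝ :=
  fun p =>
    Gam α x β ^ (-(α / (1 + α))) *
      (plrmPi x β p.1.castSucc ^ α * y p.1.castSucc -
        Ups α x β y / Gam α x β * plrmPi x β p.1.castSucc ^ (α + 1)) * x p.2

/-- The ML score `Ψ_0(β,x,y) = (y* − π*(x,β)) ⊗ x`. -/
def psi0Vec {d k : ℕ} (x : Fin (k + 1) → ℝ) (β : Fin d → Fin (k + 1) → ℝ)
    (y : Fin (d + 1) → ℝ) : Fin d × Fin (k + 1) → ℝ :=
  fun p => (y p.1.castSucc - plrmPi x β p.1.castSucc) * x p.2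

/-- `ξ(α) = (Δ*(π)·diag^{α−1}(π)·π) ⊗ x ∈ ℝ^{d(k+1)}`. -/
def xiVec {d k : ℕ} (α : ℝ) (x : Fin (k + 1) → ℝ) (π : Fin (d + 1) → ℝ) :
    Fin d × Fin (k + 1) → ℝ :=
  fun p => (deltaStar π *ᵥ (diagPow π (α - 1) *ᵥ π)) p.1 * x p.2

/-- `J(α) = (Δ*(π)·diag^{α−1}(π)·Δ*(π)ᵀ) ⊗ (xxᵀ)`. -/
def Jmat {d k : ℕ} (α : ℝ) (x : Fin (k + 1) → ℝ) (π : Fin (d + 1) → ℝ) :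
    Matrix (Fin d × Fin (k + 1)) (Fin d × Fin (k + 1)) ℝ :=
  Matrix.of fun p q =>
    (deltaStar π * diagPow π (α - 1) * (deltaStar π)ᵀ) p.1 q.1 * (x p.2 * x q.2)

lemma plrmPi_pos {d k : ℕ} (x : Fin (k + 1) → ℝ) (β : Fin d → Fin (k + 1) → ℝ)
    (j : Fin (d + 1)) : 0 < plrmPi x β j := by
  unfold plrmPi
  apply div_pos
  · split
    · exact Real.exp_pos _
    · exact one_pos
  · positivity

/-- sensitivity part of Theorem 2, single observation: for `α ≥ 0`,
`∑_j π_j·Ψ_α(e_j)Ψ_0(e_j)ᵀ = Γ(α)^{−α/(1+α)}·[J(α) − Γ(α)^{−1}·ξ(α)ξ(α)ᵀ]`. -/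
theorem statement9 (d k : ℕ) (hd : 1 ≤ d) (hk : 1 ≤ k) (α : ℝ) (hα : 0 ≤ α)
    (β : Fin d → Fin (k + 1) → ℝ) (x : Fin (k + 1) → ℝ) :
    (∑ j : Fin (d + 1), plrmPi x β j •
        Matrix.vecMulVec (psiVec α x β (Pi.single j 1)) (psi0Vec x β (Pi.single j 1))) =
      Gam α x β ^ (-(α / (1 + α))) •
        (Jmat α x (fun j => plrmPi x β j) -
          (Gam α x β)⁻¹ •
            Matrix.vecMulVec (xiVec α x fun j => plrmPi x β j)
              (xiVec α x fun j => plrmPi x β j)) := by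
  have hP : ∀ j, 0 < plrmPi x β j := plrmPi_pos x β
  have hGa : Gam α x β = ∑ j, plrmPi x β j ^ α * plrmPi x β j := by
    unfold Gam
    exact Finset.sum_congr rfl fun j _ => by
      rw [Real.rpow_add (hP j), Real.rpow_one]
  have hGpos : 0 < Gam α x β := by
    rw [hGa]
    apply Finset.sum_pos
    · intro j _
      exact mul_pos (Real.rpow_pos_of_pos (hP j) α) (hP j)
    · exact Finset.univ_nonempty
  have hGne : Gam α x β ≠ 0 := ne_of_gt hGpos
  have hpow : ∀ j, plrmPi x β j ^ (α + 1) = plrmPi x β j ^ α * plrmPi x β j :=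
    fun j => by rw [Real.rpow_add (hP j), Real.rpow_one]
  have hpow' : ∀ j : Fin (d+1), plrmPi x β j ^ (α - 1) * plrmPi x β j = plrmPi x β j ^ α :=
    fun j => by
      rw [Real.rpow_sub (hP j), Real.rpow_one, div_mul_cancel₀ _ (ne_of_gt (hP j))]
  have hU : ∀ j : Fin (d+1), Ups α x β (Pi.single j 1) = plrmPi x β j ^ α := by
    intro j
    unfold Ups
    simp [Pi.single_apply, mul_ite, Finset.sum_ite_eq]
  ext p q
  simp only [Matrix.sum_apply, Matrix.smul_apply, Matrix.vecMulVec_apply, smul_eq_mul,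
    Matrix.sub_apply, psiVec, psi0Vec, xiVec, Jmat, Matrix.of_apply, hU, hpow,
    Pi.single_apply]
  set g : Fin (d + 1) → ℝ := fun j => plrmPi x β j with hgdef
  set G : ℝ := Gam α x β with hGdef
  set c : ℝ := G ^ (-(α / (1 + α))) with hcdef
  simp only [show ∀ j, plrmPi x β j = g j from fun _ => rfl]
  set m : Fin (d + 1) := p.1.castSucc with hmdef
  set n : Fin (d + 1) := q.1.castSucc with hndef
  have hb : ∀ j, g j ^ (α - 1) * g j = g j ^ α := fun j => hpow' j
  have hG' : G = ∑ j, g j ^ α * g j := hGa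
  have hcond : (n = m) ↔ (p.1 = q.1) := by
    rw [hmdef, hndef]
    exact ⟨fun h => (Fin.castSucc_inj.mp h).symm, fun h => by rw [h]⟩
  -- closed form for ξ blocks
  have hxi : ∀ r : Fin d,
      (deltaStar g *ᵥ diagPow g (α - 1) *ᵥ g) r
        = g r.castSucc ^ α * g r.castSucc - g r.castSucc * G := by
    intro r
    have hw : (diagPow g (α - 1) *ᵥ g) = fun j => g j ^ α := by
      funext j
      simp only [diagPow, Matrix.mulVec_diagonal]
      exact hb j
    rw [hw]
    show ∑ j, deltaStar g r j * g j ^ α = _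
    have step : ∀ j, deltaStar g r j * g j ^ α
        = (if r.castSucc = j then g r.castSucc * g j ^ α else 0)
            - g r.castSucc * (g j ^ α * g j) := by
      intro j
      simp only [deltaStar, Matrix.of_apply, deltaMat, Matrix.sub_apply,
        Matrix.diagonal_apply, Matrix.vecMulVec_apply]
      split_ifs <;> ring
    rw [Finset.sum_congr rfl fun j _ => step j, Finset.sum_sub_distrib,
      Finset.sum_ite_eq, ← Finset.mul_sum, ← hG']
    simp only [Finset.mem_univ, if_true]
    ring
  -- closed form for the J block
  have hJ : ((deltaStar g) * diagPow g (α - 1) * (deltaStar g)ᵀ) p.1 q.1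
      = (if p.1 = q.1 then g m ^ α * g m else 0) - g m * (g m ^ α) * g n
          - g m * (g n ^ α * g n) + g m * g n * G := by
    have hmul : ((deltaStar g) * diagPow g (α - 1) * (deltaStar g)ᵀ) p.1 q.1
        = ∑ j, deltaStar g p.1 j * g j ^ (α - 1) * deltaStar g q.1 j := by
      rw [Matrix.mul_apply]
      refine Finset.sum_congr rfl fun j _ => ?_
      rw [Matrix.transpose_apply, diagPow, Matrix.mul_diagonal]
    rw [hmul]
    have step : ∀ j, deltaStar g p.1 j * g j ^ (α - 1) * deltaStar g q.1 j
        = (((if m = j then (if n = j then g m * g j ^ (α - 1) * g n else 0) else 0)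
            - (if m = j then g m * (g j ^ (α - 1) * g j) * g n else 0))
          - (if n = j then g m * (g j ^ (α - 1) * g j) * g n else 0))
          + g m * g n * (g j ^ (α - 1) * g j * g j) := by
      intro j
      simp only [deltaStar, Matrix.of_apply, deltaMat, Matrix.sub_apply,
        Matrix.diagonal_apply, Matrix.vecMulVec_apply, ← hmdef, ← hndef]
      split_ifs <;> ring
    rw [Finset.sum_congr rfl fun j _ => step j]
    rw [Finset.sum_add_distrib, Finset.sum_sub_distrib, Finset.sum_sub_distrib,
      Finset.sum_ite_eq, Finset.sum_ite_eq, Finset.sum_ite_eq]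
    have hsum4 : ∑ j, g m * g n * (g j ^ (α - 1) * g j * g j) = g m * g n * G := by
      rw [← Finset.mul_sum]
      congr 1
      rw [hG']
      exact Finset.sum_congr rfl fun j _ => by rw [hb j]
    rw [hsum4]
    simp only [Finset.mem_univ, if_true, hb]
    split_ifs with h1 h2 h2
    · rw [h1]
      linear_combination g m * hb m
    · exact absurd (hcond.mp h1) h2
    · exact absurd (hcond.mpr h2) h1
    · ring
  -- closed form for the LHS sum
  have hL : (∑ j : Fin (d + 1), g j *
        (c * (g m ^ α * (if m = j then 1 else 0) - g j ^ α / G * (g m ^ α * g m)) * x p.2 *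
          (((if n = j then 1 else 0) - g n) * x q.2)))
      = c * (((if p.1 = q.1 then g m ^ α * g m else 0)
          - g m ^ α * g m * (g n ^ α * g n) / G) * (x p.2 * x q.2)) := by
    have step : ∀ j : Fin (d + 1), g j *
        (c * (g m ^ α * (if m = j then 1 else 0) - g j ^ α / G * (g m ^ α * g m)) * x p.2 *
          (((if n = j then 1 else 0) - g n) * x q.2))
        = (((if m = j then (if n = j then c * (g j * g m ^ α) * (x p.2 * x q.2) else 0) else 0)
            - (if m = j then c * (g j * g m ^ α * g n) * (x p.2 * x q.2) else 0))
          - (if n = j then (g j ^ α * g j) * (c * (g m ^ α * g m) / G * (x p.2 * x q.2)) else 0))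
          + (g j ^ α * g j) * (c * (g m ^ α * g m * g n) / G * (x p.2 * x q.2)) := by
      intro j
      split_ifs <;> ring
    rw [Finset.sum_congr rfl fun j _ => step j]
    rw [Finset.sum_add_distrib, Finset.sum_sub_distrib, Finset.sum_sub_distrib,
      Finset.sum_ite_eq, Finset.sum_ite_eq, Finset.sum_ite_eq,
      ← Finset.sum_mul, ← hG']
    simp only [Finset.mem_univ, if_true]
    split_ifs with h1 h2 h2
    · field_simp
      ring
    · exact absurd (hcond.mp h1) h2
    · exact absurd (hcond.mpr h2) h1
    · field_simp
      ring
  refine hL.trans ?_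
  rw [hJ]
  simp only [hxi]
  rw [← hmdef, ← hndef]
  have key : ∀ t : ℝ, (t - g m ^ α * g m * (g n ^ α * g n) / G) * (x p.2 * x q.2)
      = (t - g m * g m ^ α * g n - g m * (g n ^ α * g n) + g m * g n * G) * (x p.2 * x q.2)
        - G⁻¹ * ((g m ^ α * g m - g m * G) * x p.2 * ((g n ^ α * g n - g n * G) * x q.2)) := by
    intro t
    field_simp
    ring
  congr 1
  exact key _

end
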